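/- arXiv:1801.05334 — 2 statements merged into one kernel-verified Lean document; each statement's English description precedes it below -/
import Mathlib

section
/- Let w be a finite word with least period p, and suppose w also has a period q with p < q ≤ |w| such that the length-q prefix z of w is primitive. If |w| ≥ p + q, then a contradiction follows; hence |w| < p + q, i.e., the exponent |w|/q is less than 1 + p/q < 2. -/
/-- `p` is a period of the finite word `w`. -/
def hasPeriod {α : Type*} (w : List α) (p : ℕ) : Prop :=
  0 < p ∧ ∀ i : ℕ, i + p < w.length → w[i]? = w[i + p]?

/-- A finite word is primitive if it is not a power `u^k` with `k ≥ 2`. -/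
def Primitive {α : Type*} (z : List α) : Prop :=
  z ≠ [] ∧ ∀ (u : List α) (k : ℕ), 2 ≤ k → z ≠ (List.replicate k u).flatten

/-!
If `|w| ≥ p + q`, the two periods overlap enough that `q - p` is again a period; since `p` is the
least period, iterating this subtraction shows `p ∣ q`. The prefix of length `q = k p` is then the
`k`-th power of the prefix of length `p`, with `k ≥ 2` because `p < q`, contradicting primitivity.
-/

namespace hasPeriod

variable {α : Type*} {w : List α} {p q : ℕ}

theorem sub (hp : hasPeriod w p) (hq : hasPeriod w q) (hpq : p < q)
    (hlen : p + q ≤ w.length) : hasPeriod w (q - p) := by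
  refine ⟨Nat.sub_pos_of_lt hpq, fun i hi => ?_⟩
  rcases lt_or_ge (i + q) w.length with h | h
  · rw [hq.2 i h, hp.2 (i + (q - p)) (by omega)]
    congr 1
    omega
  · -- `i + q` lies beyond `w`, so `i ≥ p`: step back by `p`, then forward by `q`
    have h₁ := hp.2 (i - p) (by omega)
    have h₂ := hq.2 (i - p) (by omega)
    rw [show i = i - p + p by omega, ← h₁, h₂]
    congr 1
    omega

theorem dvd_of_forall_le (hp : hasPeriod w p) (hleast : ∀ r, hasPeriod w r → p ≤ r)
    (hq : hasPeriod w q) (hlen : p + q ≤ w.length) : p ∣ q := by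
  induction q using Nat.strong_induction_on with
  | _ q ih =>
    rcases (hleast q hq).eq_or_lt with rfl | hpq
    · exact dvd_rfl
    · have hsub := hp.sub hq hpq hlen
      have hdvd : p ∣ q - p := ih (q - p) (Nat.sub_lt_self hp.1 hpq.le) hsub (by omega)
      simpa [Nat.sub_add_cancel hpq.le] using hdvd.add (dvd_refl p)

theorem getElem?_add_mul (hp : hasPeriod w p) {i : ℕ} :
    ∀ k, i + k * p < w.length → w[i + k * p]? = w[i]?
  | 0, _ => by simp
  | k + 1, h => by
    have h' : i + k * p + p < w.length := by linarith [Nat.succ_mul k p]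
    rw [Nat.succ_mul, ← add_assoc, ← hp.2 _ h', hp.getElem?_add_mul k (by omega)]

theorem take_mul_eq_flatten_replicate (hp : hasPeriod w p) :
    ∀ k, k * p ≤ w.length → w.take (k * p) = (List.replicate k (w.take p)).flatten
  | 0, _ => by simp
  | k + 1, h => by
    rw [Nat.succ_mul] at h
    have hblock : (w.drop (k * p)).take p = w.take p := by
      refine List.ext_getElem? fun i => ?_
      rcases lt_or_ge i p with hi | hi
      · rw [List.getElem?_take_of_lt hi, List.getElem?_take_of_lt hi, List.getElem?_drop,
          Nat.add_comm, hp.getElem?_add_mul k (by omega)]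
      · simp [Nat.not_lt.2 hi]
    rw [Nat.succ_mul, List.take_add, hp.take_mul_eq_flatten_replicate k (by omega), hblock,
      List.replicate_succ', List.flatten_concat]

end hasPeriod

theorem exponent_lt_two_of_primitive_nonminimal_period_general {α : Type*} (w : List α) (p q : ℕ)
    (hp : hasPeriod w p) (hleast : ∀ r : ℕ, hasPeriod w r → p ≤ r)
    (hq : hasPeriod w q) (hpq : p < q)
    (hprim : Primitive (w.take q)) :
    w.length < p + q := by
  by_contra! hlen
  obtain ⟨k, rfl⟩ := hp.dvd_of_forall_le hleast hq hlen
  have hk : 1 < k := Nat.lt_of_mul_lt_mul_left (a := p) (by simpa using hpq)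
  refine hprim.2 (w.take p) k hk ?_
  rw [mul_comm]
  exact hp.take_mul_eq_flatten_replicate k (by nlinarith)

theorem exponent_lt_two_of_primitive_nonminimal_period {α : Type*} (w : List α) (p q : ℕ)
    (hp : hasPeriod w p) (hleast : ∀ r : ℕ, hasPeriod w r → p ≤ r)
    (hq : hasPeriod w q) (hpq : p < q) (hql : q ≤ w.length)
    (hprim : Primitive (w.take q)) :
    w.length < p + q :=
  exponent_lt_two_of_primitive_nonminimal_period_general w p q hp hleast hq hpq hprim
end

section
/- The word x_4 over {0,1,2,3}, obtained from the Fibonacci word by replacing the n-th occurrence of 0 by the n-th letter of (01)^ω and the n-th occurrence of 1 by the n-th letter of (23)^ω, has critical exponent 1 + φ/2, where φ = (1+√5)/2. -/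
/-- The finite word `u` occurs in the infinite word `x` at position `i`. -/
def OccursAt (u : List ℕ) (x : ℕ → ℕ) (i : ℕ) : Prop :=
  u = (List.range u.length).map fun j => x (i + j)

/-- `u` is a factor of the infinite word `x`. -/
def IsFactorI (u : List ℕ) (x : ℕ → ℕ) : Prop :=
  ∃ i : ℕ, OccursAt u x i

/-- The finite Fibonacci words: `f 0 = 0`, `f 1 = 01`, `f (n+2) = f (n+1) f n`. -/
def fibList : ℕ → List ℕ
  | 0 => [0]
  | 1 => [0, 1]
  | (n+2) => fibList (n+1) ++ fibList n

/-- The infinite Fibonacci word (fixed point of `0 ↦ 01`, `1 ↦ 0`). -/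
def fibWord (n : ℕ) : ℕ := (fibList (n+2)).getD n 0

/-- Number of occurrences of the letter `a` among `x 0, ..., x (n-1)`. -/
def countBelow (x : ℕ → ℕ) (a n : ℕ) : ℕ :=
  ((Finset.range n).filter fun j => x j = a).card

/-- The set of exponents of nonempty factors of the infinite word `x`. -/
def expSet (x : ℕ → ℕ) : Set ℝ :=
  {e | ∃ (u : List ℕ) (p : ℕ), IsFactorI u x ∧ u ≠ [] ∧ hasPeriod u p ∧
        e = (u.length : ℝ) / p}

/-- The word `x₄`: replace the `n`-th occurrence of `0` in the Fibonacci word by the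
`n`-th letter of `(01)^ω` and the `n`-th occurrence of `1` by the `n`-th letter of
`(23)^ω`. -/
def x4 (n : ℕ) : ℕ :=
  if fibWord n = 0 then countBelow fibWord 0 n % 2
  else 2 + countBelow fibWord 1 n % 2

/-!
The Fibonacci word is the mechanical word `c n = ⌊(n + 2) α⌋ - ⌊(n + 1) α⌋` of slope `α = 2 - φ`,
so the factor of length `p` at `n` contains `⌊x + p α⌋ - ⌊x⌋` letters `1`, where `x = (n + 1) α`.
If `x₄` has period `p` along a run of length `s ≥ 3`, then so has `c`, these counts are constant
along the run, and as `c` contains neither `11` nor `000` the parity rule defining `x₄` forces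
`p = 2 P` and the count to be some even `2 W`. Modulo `1`, the points `(n + 1) α` of the run then
avoid an arc of length `|2 (P α - W)|`, which exceeds `φ⁻¹ ^ (j + 1)` when
`fib (j + 2) ≤ P < fib (j + 3)` because Fibonacci numbers are the best approximation denominators
of `α`. Any `fib (j + 3)` consecutive points are `φ⁻¹ ^ (j + 1)`-dense, so
`s + 2 ≤ fib (j + 3) ≤ φ P + 1`, i.e. `(p + s) / p < 1 + φ / 2`. Conversely `x₄` has period
`2 fib (2 t + 2)` along a run of length `fib (2 t + 3) - 2`, and these exponents tend to
`1 + φ / 2`.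
-/

open Real
open Nat (fib)
open scoped goldenRatio

lemma inv_goldenRatio_lt_one : φ⁻¹ < 1 := inv_lt_one_of_one_lt₀ one_lt_goldenRatio

lemma one_half_lt_inv_goldenRatio : 1 / 2 < φ⁻¹ := by
  rw [one_div]; exact inv_strictAnti₀ goldenRatio_pos goldenRatio_lt_two

lemma inv_goldenRatio_pow_add_two (k : ℕ) : φ⁻¹ ^ (k + 2) = φ⁻¹ ^ k - φ⁻¹ ^ (k + 1) := by
  have h : φ⁻¹ ^ 2 = 1 - φ⁻¹ := by
    rw [inv_goldenRatio, ← one_sub_goldenConj]; linear_combination goldenRatio_sq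
  rw [pow_add, h, pow_succ]; ring

lemma inv_goldenRatio_pow_le_pow {m n : ℕ} (h : m ≤ n) : φ⁻¹ ^ n ≤ φ⁻¹ ^ m :=
  pow_le_pow_of_le_one (by positivity) inv_goldenRatio_lt_one.le h

lemma inv_goldenRatio_pow_lt_pow {m n : ℕ} (h : m < n) : φ⁻¹ ^ n < φ⁻¹ ^ m :=
  pow_lt_pow_right_of_lt_one₀ (by positivity) inv_goldenRatio_lt_one h

lemma goldenConj_pow_of_even {k : ℕ} (hk : Even k) : ψ ^ k = φ⁻¹ ^ k := by
  rw [inv_goldenRatio, hk.neg_pow]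

lemma goldenConj_pow_of_odd {k : ℕ} (hk : Odd k) : ψ ^ k = -φ⁻¹ ^ k := by
  rw [inv_goldenRatio, hk.neg_pow, neg_neg]

lemma abs_goldenConj_pow (k : ℕ) : |ψ ^ k| = φ⁻¹ ^ k := by
  rw [abs_pow, abs_of_neg goldenConj_neg, ← inv_goldenRatio]

noncomputable def fibSlope : ℝ := 2 - φ

lemma lt_fibSlope : 0.38 < fibSlope := by
  have : √5 < 2.24 := (Real.sqrt_lt' (by norm_num)).2 (by norm_num)
  unfold fibSlope goldenRatio; linarith

lemma fibSlope_lt : fibSlope < 0.385 := by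
  have : 2.23 < √5 := (Real.lt_sqrt (by norm_num)).2 (by norm_num)
  unfold fibSlope goldenRatio; linarith

lemma fib_mul_fibSlope (m : ℕ) : (fib m : ℝ) * fibSlope = 2 * fib m - fib (m + 1) + ψ ^ m := by
  unfold fibSlope
  linarith [fib_succ_sub_goldenRatio_mul_fib m]

lemma fib_mul_fibSlope_eq_add_intCast (m : ℕ) :
    (fib m : ℝ) * fibSlope = ψ ^ m + ((2 * fib m - fib (m + 1) : ℤ) : ℝ) := by
  push_cast; linarith [fib_mul_fibSlope m]

lemma floor_add_eq_floor_add_floor_fract_add (x y : ℝ) : ⌊x + y⌋ = ⌊x⌋ + ⌊Int.fract x + y⌋ := by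
  rw [← Int.floor_intCast_add, ← add_assoc, Int.floor_add_fract]

lemma fract_add_eq_fract_add {x y : ℝ} (h0 : 0 ≤ Int.fract x + y) (h1 : Int.fract x + y < 1) :
    Int.fract (x + y) = Int.fract x + y :=
  Int.fract_eq_iff.2 ⟨h0, h1, ⌊x⌋, by rw [Int.fract]; ring⟩

lemma fract_add_fib_mul_fibSlope {x : ℝ} {m : ℕ} (h0 : 0 ≤ Int.fract x + ψ ^ m)
    (h1 : Int.fract x + ψ ^ m < 1) : Int.fract (x + fib m * fibSlope) = Int.fract x + ψ ^ m := by
  rw [fib_mul_fibSlope_eq_add_intCast, ← add_assoc, Int.fract_add_intCast,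
    fract_add_eq_fract_add h0 h1]

lemma floor_add_fib_mul_fibSlope {x : ℝ} {m : ℕ} (h0 : 0 ≤ Int.fract x + ψ ^ m)
    (h1 : Int.fract x + ψ ^ m < 1) :
    ⌊x + fib m * fibSlope⌋ = ⌊x⌋ + (2 * fib m - fib (m + 1)) := by
  rw [fib_mul_fibSlope_eq_add_intCast, ← add_assoc, Int.floor_add_intCast,
    floor_add_eq_floor_add_floor_fract_add, Int.floor_eq_zero_iff.2 ⟨h0, h1⟩, add_zero]

lemma abs_le_abs_sub_intCast {x : ℝ} (hx : |x| ≤ 1 / 2) (z : ℤ) : |x| ≤ |x - z| := by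
  rcases eq_or_ne z 0 with rfl | hz
  · simp
  · have : (1 : ℝ) ≤ |(z : ℝ)| := by exact_mod_cast Int.one_le_abs hz
    have := abs_sub_abs_le_abs_sub (z : ℝ) x
    rw [abs_sub_comm] at this
    linarith

/-- Since `|fib j * (2 - φ) - (2 fib j - fib (j + 1))| = φ⁻¹ ^ j`, no denominator below
`fib (j + 1)` approximates `2 - φ` better than `fib j`. -/
theorem inv_goldenRatio_pow_le_abs_mul_fibSlope_sub (j : ℕ) {m : ℕ} (hm0 : 0 < m)
    (hm : m < fib (j + 1)) (z : ℤ) : φ⁻¹ ^ j ≤ |m * fibSlope - z| := by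
  induction j using Nat.twoStepInduction generalizing m z with
  | zero => simp at hm; omega
  | one => simp at hm; omega
  | more j ih₀ ih₁ =>
    rcases lt_or_ge m (fib (j + 2)) with hlt | hge
    · exact (inv_goldenRatio_pow_le_pow (by omega)).trans (ih₁ hm0 hlt z)
    obtain ⟨m, rfl⟩ := Nat.exists_eq_add_of_le hge
    have hfib : fib (j + 2 + 1) = fib (j + 1) + fib (j + 2) := Nat.fib_add_two
    set z' : ℤ := z - (2 * fib (j + 2) - fib (j + 2 + 1))
    have hsplit :
        ((fib (j + 2) + m : ℕ) : ℝ) * fibSlope - z = (m * fibSlope - z') + ψ ^ (j + 2) := by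
      push_cast [z']; linear_combination fib_mul_fibSlope (j + 2)
    have hψ := abs_goldenConj_pow (j + 2)
    rw [hsplit]
    rcases m.eq_zero_or_pos with rfl | hm0
    · have hsmall : φ⁻¹ ^ (j + 2) ≤ 1 / 2 := by
        linarith [inv_goldenRatio_pow_le_pow (show 2 ≤ j + 2 by omega),
          inv_goldenRatio_pow_add_two 0, one_half_lt_inv_goldenRatio]
      have := abs_le_abs_sub_intCast (x := ψ ^ (j + 2)) (hψ ▸ hsmall) z'
      rw [hψ] at this
      convert this using 2; push_cast; ring
    · have := abs_sub_abs_le_abs_sub (m * fibSlope - z') (-ψ ^ (j + 2))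
      rw [abs_neg, hψ, sub_neg_eq_add] at this
      linarith [ih₀ hm0 (by omega) z', inv_goldenRatio_pow_add_two j,
        inv_goldenRatio_pow_le_pow (show j + 1 ≤ j + 2 by omega)]

lemma fract_mul_fibSlope_mem_Icc (j : ℕ) {m : ℕ} (hm0 : 0 < m) (hm : m < fib (j + 1)) :
    Int.fract (m * fibSlope) ∈ Set.Icc (φ⁻¹ ^ j) (1 - φ⁻¹ ^ j) := by
  have h₁ := inv_goldenRatio_pow_le_abs_mul_fibSlope_sub j hm0 hm ⌊(m : ℝ) * fibSlope⌋
  have h₂ := inv_goldenRatio_pow_le_abs_mul_fibSlope_sub j hm0 hm (⌊(m : ℝ) * fibSlope⌋ + 1)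
  have h₃ := Int.fract_lt_one ((m : ℝ) * fibSlope)
  rw [Int.self_sub_floor, abs_of_nonneg (Int.fract_nonneg _)] at h₁
  push_cast at h₂
  rw [← sub_sub, Int.self_sub_floor, abs_of_neg (by linarith)] at h₂
  exact ⟨h₁, by linarith⟩

/-- The multiples `fib m * (2 - φ)` fall just below an integer only for odd `m`, so for odd `j`
the upper bound `1 - φ⁻¹ ^ j` holds up to `fib (j + 2)` rather than `fib (j + 1)`. -/
lemma fract_mul_fibSlope_le_of_odd {j m : ℕ} (hj : Odd j) (hm0 : 0 < m) (hm : m < fib (j + 2)) :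
    Int.fract (m * fibSlope) ≤ 1 - φ⁻¹ ^ j := by
  rcases lt_or_ge m (fib (j + 1)) with hlt | hge
  · exact (fract_mul_fibSlope_mem_Icc j hm0 hlt).2
  obtain ⟨t, rfl⟩ := hj
  obtain ⟨k, rfl⟩ := Nat.exists_eq_add_of_le hge
  have hfib : fib (2 * t + 1 + 2) = fib (2 * t + 1) + fib (2 * t + 1 + 1) := Nat.fib_add_two
  have hk' : Int.fract ((k : ℝ) * fibSlope) ≤ 1 - φ⁻¹ ^ (2 * t) := by
    rcases k.eq_zero_or_pos with rfl | hk0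
    · simpa using pow_le_one₀ (by positivity) inv_goldenRatio_lt_one.le
    · exact (fract_mul_fibSlope_mem_Icc (2 * t) hk0 (by omega)).2
  have hψ : ψ ^ (2 * t + 1 + 1) = φ⁻¹ ^ (2 * t + 2) := goldenConj_pow_of_even ⟨t + 1, by ring⟩
  have hrec := inv_goldenRatio_pow_add_two (2 * t)
  have hpos : 0 < φ⁻¹ ^ (2 * t + 1) := by positivity
  have hpos' : 0 < φ⁻¹ ^ (2 * t + 2) := by positivity
  have key := fract_add_fib_mul_fibSlope (x := k * fibSlope) (m := 2 * t + 1 + 1)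
    (by rw [hψ]; linarith [Int.fract_nonneg ((k : ℝ) * fibSlope)]) (by rw [hψ]; linarith)
  rw [show ((fib (2 * t + 1 + 1) + k : ℕ) : ℝ) * fibSlope
      = k * fibSlope + fib (2 * t + 1 + 1) * fibSlope by push_cast; ring, key, hψ]
  linarith

/-- The second conjunct is the invariant of the greedy induction: for odd `k`, a fractional part in
`[φ⁻¹ ^ (k + 1), φ⁻¹ ^ k)` is reached with `d < fib (k + 1)`, leaving room to add `fib (k + 2)`. -/
lemma exists_fract_add_mul_fibSlope_lt (y : ℝ) (k : ℕ) :
    ∃ d < fib (k + 2), Int.fract (y + d * fibSlope) < φ⁻¹ ^ k ∧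
      (Odd k → φ⁻¹ ^ (k + 1) ≤ Int.fract (y + d * fibSlope) → d < fib (k + 1)) := by
  induction k with
  | zero => exact ⟨0, by simp, by simpa using Int.fract_lt_one y, by simp⟩
  | succ k ih =>
    obtain ⟨d, hd, hlt, hodd⟩ := ih
    have hrec := inv_goldenRatio_pow_add_two k
    have hpos : 0 < φ⁻¹ ^ (k + 1) := by positivity
    have hfib : fib (k + 1 + 2) = fib (k + 1) + fib (k + 2) := Nat.fib_add_two
    by_cases hsmall : Int.fract (y + d * fibSlope) < φ⁻¹ ^ (k + 1)
    · exact ⟨d, hd.trans_le Nat.fib_le_fib_succ, hsmall, fun _ _ => hd⟩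
    push Not at hsmall
    have hstep m : y + ((d + fib m : ℕ) : ℝ) * fibSlope = y + d * fibSlope + fib m * fibSlope := by
      push_cast; ring
    rcases k.even_or_odd with hk | hk
    · have hψ := goldenConj_pow_of_odd hk.add_one
      have key := fract_add_fib_mul_fibSlope (x := y + d * fibSlope) (m := k + 1)
        (by linarith) (by linarith [Int.fract_lt_one (y + d * fibSlope), hψ])
      refine ⟨d + fib (k + 1), by omega, ?_, fun _ h => ?_⟩
      · rw [hstep, key, hψ]; linarith [inv_goldenRatio_pow_lt_pow (show k + 1 < k + 2 by omega)]
      · rw [hstep, key, hψ] at h; linarith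
    · have hψ := goldenConj_pow_of_odd (hk.add_even even_two)
      have key := fract_add_fib_mul_fibSlope (x := y + d * fibSlope) (m := k + 2)
        (by linarith [inv_goldenRatio_pow_lt_pow (show k + 1 < k + 2 by omega)])
        (by linarith [Int.fract_lt_one (y + d * fibSlope), hψ])
      refine ⟨d + fib (k + 2), by have := hodd hk hsmall; omega, ?_, fun h _ => ?_⟩
      · rw [hstep, key, hψ]; linarith
      · exact absurd hk (Nat.odd_add_one.1 h)

theorem exists_fract_mul_fibSlope_mem_Ico (k N : ℕ) {a : ℝ} (ha : 0 ≤ a) (hak : a + φ⁻¹ ^ k ≤ 1) :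
    ∃ d < fib (k + 2), Int.fract ((N + d : ℕ) * fibSlope) ∈ Set.Ico a (a + φ⁻¹ ^ k) := by
  obtain ⟨d, hd, hlt, -⟩ := exists_fract_add_mul_fibSlope_lt (N * fibSlope - a) k
  refine ⟨d, hd, ?_⟩
  have h₀ := Int.fract_nonneg (N * fibSlope - a + d * fibSlope)
  have : ((N + d : ℕ) : ℝ) * fibSlope = (N * fibSlope - a + d * fibSlope) + a := by push_cast; ring
  rw [this, fract_add_eq_fract_add (by linarith) (by linarith)]
  constructor <;> linarith

lemma length_fibList : ∀ n, (fibList n).length = fib (n + 2)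
  | 0 => rfl
  | 1 => rfl
  | n + 2 => by
    rw [fibList, List.length_append, length_fibList (n + 1), length_fibList n,
      Nat.fib_add_two (n := n + 2), add_comm]

lemma fibList_prefix_succ : ∀ n, fibList n <+: fibList (n + 1)
  | 0 => ⟨[1], rfl⟩
  | _ + 1 => List.prefix_append _ _

lemma fibList_prefix_of_le {m n : ℕ} (h : m ≤ n) : fibList m <+: fibList n := by
  induction n, h using Nat.le_induction with
  | base => exact List.prefix_refl _
  | succ n _ ih => exact ih.trans (fibList_prefix_succ n)

lemma List.IsPrefix.getD_eq {α : Type*} {l₁ l₂ : List α} (h : l₁ <+: l₂) {n : ℕ}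
    (hn : n < l₁.length) (d : α) : l₁.getD n d = l₂.getD n d := by
  rw [List.getD_eq_getElem _ _ hn, List.getD_eq_getElem _ _ (hn.trans_le h.length_le),
    h.getElem hn]

lemma fibWord_eq_getD {m n : ℕ} (h : n < fib (m + 2)) : fibWord n = (fibList m).getD n 0 := by
  rcases le_total (n + 2) m with hle | hle
  · refine (fibList_prefix_of_le hle).getD_eq ?_ 0
    rw [length_fibList]; linarith [Nat.le_fib_add_one (n + 4)]
  · exact ((fibList_prefix_of_le hle).getD_eq (by rwa [length_fibList]) 0).symm

lemma fibWord_fib_add {k t : ℕ} (ht : t < fib (k + 2)) :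
    fibWord (fib (k + 3) + t) = fibWord t := by
  have hfib : fib (k + 2 + 2) = fib (k + 2) + fib (k + 3) := Nat.fib_add_two
  have hlen : (fibList (k + 1)).length = fib (k + 3) := length_fibList (k + 1)
  rw [fibWord_eq_getD (m := k + 2) (by omega), fibList, List.getD_append_right _ _ _ _ (by omega),
    hlen, Nat.add_sub_cancel_left, fibWord_eq_getD ht]

lemma floor_mul_fibSlope_add_fib {j m : ℕ} (hm0 : 0 < m) (hm : m < fib (j + 1)) :
    ⌊((m : ℝ) + fib (j + 1)) * fibSlope⌋ = ⌊m * fibSlope⌋ + (2 * fib (j + 1) - fib (j + 2)) := by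
  have hfract := fract_mul_fibSlope_mem_Icc j hm0 hm
  have hψ := abs_le.1 (abs_goldenConj_pow (j + 1)).le
  have hlt := inv_goldenRatio_pow_lt_pow (show j < j + 1 by omega)
  rw [add_mul, floor_add_fib_mul_fibSlope] <;> linarith [hfract.1, hfract.2, hψ.1, hψ.2]

lemma floor_mul_fibSlope_one_to_six :
    ⌊fibSlope⌋ = 0 ∧ ⌊2 * fibSlope⌋ = 0 ∧ ⌊3 * fibSlope⌋ = 1 ∧ ⌊4 * fibSlope⌋ = 1 ∧
      ⌊5 * fibSlope⌋ = 1 ∧ ⌊6 * fibSlope⌋ = 2 := by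
  have := lt_fibSlope; have := fibSlope_lt
  refine ⟨?_, ?_, ?_, ?_, ?_, ?_⟩ <;> rw [Int.floor_eq_iff] <;> norm_num <;> constructor <;>
    linarith

theorem fibWord_eq_floor_sub_floor (n : ℕ) :
    (fibWord n : ℤ) = ⌊((n : ℝ) + 2) * fibSlope⌋ - ⌊((n : ℝ) + 1) * fibSlope⌋ := by
  induction n using Nat.strong_induction_on with
  | _ n ih =>
  rcases lt_or_ge n 5 with hn | hn
  · obtain ⟨h₁, h₂, h₃, h₄, h₅, h₆⟩ := floor_mul_fibSlope_one_to_six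
    interval_cases n <;> norm_num [fibWord, fibList, h₁, h₂, h₃, h₄, h₅, h₆]
  obtain ⟨k, hk⟩ : ∃ k, Nat.greatestFib n = k + 5 :=
    ⟨Nat.greatestFib n - 5, by have := Nat.le_greatestFib.2 (show fib 5 ≤ n from hn); omega⟩
  have hlo := Nat.fib_greatestFib_le n
  have hhi := Nat.lt_fib_greatestFib_add_one n
  rw [hk] at hlo hhi
  -- `n = fib (k + 5) + t` repeats the letter at `t < fib (k + 4)`, and both floors shift equally.
  obtain ⟨t, rfl⟩ := Nat.exists_eq_add_of_le hlo
  have hfib₆ : fib (k + 5 + 1) = fib (k + 4) + fib (k + 5) := Nat.fib_add_two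
  have hfib₅ : fib (k + 4 + 1) = fib (k + 3) + fib (k + 4) := Nat.fib_add_two
  have hfib₃ : 2 ≤ fib (k + 3) := le_trans (by decide) (Nat.fib_mono (show 3 ≤ k + 3 by omega))
  have r₁ : fib (k + 2 + 2) = fib (k + 4) := rfl
  have r₂ : fib (k + 4 + 1) = fib (k + 5) := rfl
  have e₁ := floor_mul_fibSlope_add_fib (j := k + 4) (m := t + 1) (by omega) (by omega)
  have e₂ := floor_mul_fibSlope_add_fib (j := k + 4) (m := t + 2) (by omega) (by omega)
  rw [fibWord_fib_add (k := k + 2) (by omega), ih t (by omega),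
    show ((fib (k + 5) + t : ℕ) : ℝ) + 2 = ((t + 2 : ℕ) : ℝ) + fib (k + 4 + 1) by push_cast; ring,
    show ((fib (k + 5) + t : ℕ) : ℝ) + 1 = ((t + 1 : ℕ) : ℝ) + fib (k + 4 + 1) by push_cast; ring,
    e₁, e₂]
  push_cast
  ring

lemma fibWord_le_one (n : ℕ) : fibWord n ≤ 1 := by
  have h := fibWord_eq_floor_sub_floor n
  have := Int.le_floor_add_floor (((n : ℝ) + 1) * fibSlope) fibSlope
  rw [show ((n : ℝ) + 1) * fibSlope + fibSlope = ((n : ℝ) + 2) * fibSlope by ring,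
    (floor_mul_fibSlope_one_to_six).1] at this
  omega

lemma fibWord_add_fibWord_add_one_le_one (n : ℕ) : fibWord n + fibWord (n + 1) ≤ 1 := by
  have h₁ := fibWord_eq_floor_sub_floor n
  have h₂ := fibWord_eq_floor_sub_floor (n + 1)
  have := Int.le_floor_add_floor (((n : ℝ) + 1) * fibSlope) (2 * fibSlope)
  rw [(floor_mul_fibSlope_one_to_six).2.1] at this
  push_cast at h₂
  ring_nf at h₁ h₂ this ⊢
  omega

lemma one_le_fibWord_add_fibWord_add_fibWord (n : ℕ) :
    1 ≤ fibWord n + fibWord (n + 1) + fibWord (n + 2) := by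
  have h₁ := fibWord_eq_floor_sub_floor n
  have h₂ := fibWord_eq_floor_sub_floor (n + 1)
  have h₃ := fibWord_eq_floor_sub_floor (n + 2)
  have := Int.le_floor_add (((n : ℝ) + 1) * fibSlope) (3 * fibSlope)
  rw [(floor_mul_fibSlope_one_to_six).2.2.1] at this
  push_cast at h₂ h₃
  ring_nf at h₁ h₂ h₃ this ⊢
  omega

lemma countBelow_succ (x : ℕ → ℕ) (a n : ℕ) :
    countBelow x a (n + 1) = countBelow x a n + if x n = a then 1 else 0 := by
  unfold countBelow
  rw [Finset.range_add_one, Finset.filter_insert]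
  split_ifs with h
  · rw [Finset.card_insert_of_notMem (by simp)]
  · rfl

lemma countBelow_zero_add_countBelow_one {x : ℕ → ℕ} (hx : ∀ n, x n ≤ 1) (n : ℕ) :
    countBelow x 0 n + countBelow x 1 n = n := by
  induction n with
  | zero => rfl
  | succ n ih =>
    rw [countBelow_succ, countBelow_succ]
    have := hx n
    split_ifs <;> omega

theorem countBelow_fibWord_one (n : ℕ) :
    (countBelow fibWord 1 n : ℤ) = ⌊((n : ℝ) + 1) * fibSlope⌋ := by
  induction n with
  | zero => simpa [countBelow] using (floor_mul_fibSlope_one_to_six).1.symm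
  | succ n ih =>
    have h := fibWord_eq_floor_sub_floor n
    have := fibWord_le_one n
    rw [countBelow_succ]
    push_cast
    rw [show (n : ℝ) + 1 + 1 = n + 2 by ring]
    split_ifs <;> omega

lemma x4_eq_x4_iff (m n : ℕ) :
    x4 m = x4 n ↔ fibWord m = fibWord n ∧
      countBelow fibWord (fibWord n) m % 2 = countBelow fibWord (fibWord n) n % 2 := by
  have hm := fibWord_le_one m
  have hn := fibWord_le_one n
  unfold x4
  interval_cases fibWord m <;> interval_cases fibWord n <;> simp <;> omega

lemma x4_add_one_ne (n : ℕ) : x4 (n + 1) ≠ x4 n := by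
  rw [Ne, x4_eq_x4_iff, countBelow_succ]
  simp only [if_true]
  omega

lemma x4_add_two_ne (n : ℕ) : x4 (n + 2) ≠ x4 n := by
  rw [Ne, x4_eq_x4_iff, countBelow_succ, countBelow_succ]
  have h₂ := fibWord_add_fibWord_add_one_le_one n
  have h₃ := one_le_fibWord_add_fibWord_add_fibWord n
  split_ifs <;> omega

def onesIn (p n : ℕ) : ℤ := countBelow fibWord 1 (n + p) - countBelow fibWord 1 n

lemma onesIn_add_one (p n : ℕ) : onesIn p (n + 1) = onesIn p n + fibWord (n + p) - fibWord n := by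
  have h₁ := fibWord_le_one n
  have h₂ := fibWord_le_one (n + p)
  rw [onesIn, onesIn, show n + 1 + p = n + p + 1 by ring, countBelow_succ, countBelow_succ]
  split_ifs <;> omega

lemma onesIn_eq_iff (p n : ℕ) (V : ℤ) :
    onesIn p n = V ↔ Int.fract (((n : ℝ) + 1) * fibSlope) + (p * fibSlope - V) ∈ Set.Ico 0 1 := by
  rw [onesIn, countBelow_fibWord_one, countBelow_fibWord_one,
    show ((n + p : ℕ) + 1 : ℝ) * fibSlope = ((n : ℝ) + 1) * fibSlope + p * fibSlope by
      push_cast; ring,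
    floor_add_eq_floor_add_floor_fract_add, add_sub_cancel_left, Int.floor_eq_iff, Set.mem_Ico]
  constructor <;> rintro ⟨h₁, h₂⟩ <;> constructor <;> linarith

lemma x4_add_eq_iff (p n : ℕ) :
    x4 (n + p) = x4 n ↔ fibWord (n + p) = fibWord n ∧
      2 ∣ if fibWord n = 1 then onesIn p n else p - onesIn p n := by
  have h₀₁ := countBelow_zero_add_countBelow_one fibWord_le_one n
  have h₀₁' := countBelow_zero_add_countBelow_one fibWord_le_one (n + p)
  have := fibWord_le_one n
  rw [x4_eq_x4_iff, onesIn]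
  interval_cases h : fibWord n <;> simp <;> omega

lemma onesIn_eq_onesIn_of_forall {p i s : ℕ}
    (h : ∀ n, i ≤ n → n < i + s → fibWord (n + p) = fibWord n) :
    ∀ n, i ≤ n → n ≤ i + s → onesIn p n = onesIn p i := by
  intro n hi
  induction n, hi using Nat.le_induction with
  | base => exact fun _ => rfl
  | succ n hin ih => intro hn; rw [onesIn_add_one, h n hin (by omega), ih (by omega)]; ring

lemma exists_eq_two_mul_of_x4_run {i p s : ℕ} (hs : 3 ≤ s)
    (h : ∀ n, i ≤ n → n < i + s → x4 (n + p) = x4 n) :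
    ∃ (P : ℕ) (W : ℤ), p = 2 * P ∧ ∀ n, i ≤ n → n ≤ i + s → onesIn p n = 2 * W := by
  have hletters n (h₁ : i ≤ n) (h₂ : n < i + s) := ((x4_add_eq_iff p n).1 (h n h₁ h₂)).1
  have hparity n (h₁ : i ≤ n) (h₂ : n < i + s) := ((x4_add_eq_iff p n).1 (h n h₁ h₂)).2
  have hconst := onesIn_eq_onesIn_of_forall hletters
  -- Among three consecutive letters there is a `1` and among two a `0`, so the parity rule of
  -- `x4` applies to both letters.
  have h₀ := hparity i le_rfl (by omega)
  have h₁ := hparity (i + 1) (by omega) (by omega)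
  have h₂ := hparity (i + 2) (by omega) (by omega)
  rw [hconst _ (by omega) (by omega)] at h₁ h₂
  have := fibWord_add_fibWord_add_one_le_one i
  have := one_le_fibWord_add_fibWord_add_fibWord i
  have := fibWord_le_one i
  have := fibWord_le_one (i + 1)
  have := fibWord_le_one (i + 2)
  have hV : 2 ∣ onesIn p i ∧ 2 ∣ (p - onesIn p i) := by split_ifs at h₀ h₁ h₂ <;> omega
  obtain ⟨W, hW⟩ := hV.1
  exact ⟨p / 2, W, by omega, fun n h₁ h₂ => (hconst n h₁ h₂).trans hW⟩

/-- The hypothesis says that the points `(n + 1) (2 - φ)` of the run avoid an arc of length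
`|2 (P (2 - φ) - W)| > φ⁻¹ ^ (j + 1)` modulo `1`, which `fib (j + 3)` consecutive points cannot. -/
lemma add_two_le_fib_of_forall_mem_Ico {P j i s : ℕ} (W : ℤ) (hj : fib (j + 2) ≤ P)
    (hPj : P < fib (j + 3))
    (h : ∀ n, i ≤ n → n ≤ i + s →
      Int.fract (((n : ℝ) + 1) * fibSlope) + 2 * (P * fibSlope - W) ∈ Set.Ico 0 1) :
    s + 2 ≤ fib (j + 3) := by
  set ξ := 2 * (P * fibSlope - W)
  have hP : 0 < P := (Nat.fib_pos.2 (by omega)).trans_le hj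
  have hξ : φ⁻¹ ^ (j + 1) < |ξ| := by
    have happrox := inv_goldenRatio_pow_le_abs_mul_fibSlope_sub (j + 2) hP hPj W
    have hhalf := mul_lt_mul_of_pos_left one_half_lt_inv_goldenRatio
      (show 0 < φ⁻¹ ^ (j + 1) by positivity)
    rw [pow_succ] at happrox
    rw [abs_mul, abs_two]
    linarith
  have hξ₁ : |ξ| < 1 := by
    have hi := h i le_rfl (by omega)
    have := Int.fract_nonneg (((i : ℝ) + 1) * fibSlope)
    have := Int.fract_lt_one (((i : ℝ) + 1) * fibSlope)
    rw [abs_lt]; constructor <;> linarith [hi.1, hi.2]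
  by_contra! hcon
  have hwin d (hd : d < fib (j + 3)) :
      Int.fract (((i + 1 + d : ℕ) : ℝ) * fibSlope) + ξ ∈ Set.Ico 0 1 := by
    convert h (i + d) (by omega) (by omega) using 4; push_cast; ring
  have hle := pow_le_one₀ (by positivity) inv_goldenRatio_lt_one.le (n := j + 1)
  rcases le_or_gt 0 ξ with hξ₀ | hξ₀
  · rw [abs_of_nonneg hξ₀] at hξ
    obtain ⟨d, hd, hmem⟩ := exists_fract_mul_fibSlope_mem_Ico (j + 1) (i + 1)
      (a := 1 - φ⁻¹ ^ (j + 1)) (by linarith) (by linarith)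
    linarith [(hwin d hd).2, hmem.1]
  · rw [abs_of_neg hξ₀] at hξ
    obtain ⟨d, hd, hmem⟩ := exists_fract_mul_fibSlope_mem_Ico (j + 1) (i + 1) le_rfl (by linarith)
    linarith [(hwin d hd).1, hmem.2]

lemma two_mul_le_goldenRatio_mul_of_le_fib {j p s : ℕ} (hp : 2 * fib (j + 2) ≤ p)
    (hs : s + 2 ≤ fib (j + 3)) : 2 * s ≤ φ * p := by
  have hfib := fib_succ_sub_goldenRatio_mul_fib (j + 2)
  have hψ := (abs_le.1 ((abs_goldenConj_pow (j + 2)).trans_le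
    (pow_le_one₀ (by positivity) inv_goldenRatio_lt_one.le))).2
  have hp' : 2 * (fib (j + 2) : ℝ) ≤ p := by exact_mod_cast hp
  have hs' : (s : ℝ) + 2 ≤ fib (j + 2 + 1) := by exact_mod_cast hs
  nlinarith [goldenRatio_pos]

theorem two_mul_le_goldenRatio_mul_of_x4_run {i p s : ℕ} (hp : 0 < p)
    (h : ∀ n, i ≤ n → n < i + s → x4 (n + p) = x4 n) : 2 * s ≤ φ * p := by
  rcases le_or_gt 3 s with hs | hs
  · obtain ⟨P, W, rfl, hW⟩ := exists_eq_two_mul_of_x4_run hs h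
    obtain ⟨j, hj⟩ : ∃ j, Nat.greatestFib P = j + 2 :=
      ⟨Nat.greatestFib P - 2, by
        have := Nat.le_greatestFib.2 (show fib 2 ≤ P by simp; omega); omega⟩
    have hlo := Nat.fib_greatestFib_le P
    have hhi := Nat.lt_fib_greatestFib_add_one P
    rw [hj] at hlo hhi
    refine two_mul_le_goldenRatio_mul_of_le_fib (j := j) (by omega)
      (add_two_le_fib_of_forall_mem_Ico (i := i) W hlo hhi fun n h₁ h₂ => ?_)
    convert (onesIn_eq_iff (2 * P) n (2 * W)).1 (hW n h₁ h₂) using 2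
    push_cast; ring
  rcases Nat.eq_zero_or_pos s with rfl | hs₀
  · simp only [CharP.cast_eq_zero, mul_zero]; positivity
  have hp₃ : 3 ≤ p := by
    by_contra! hp₃
    have := h i le_rfl (by omega)
    interval_cases p
    · exact x4_add_one_ne i this
    · exact x4_add_two_ne i this
  have : (3 : ℝ) ≤ p := by exact_mod_cast hp₃
  have : (s : ℝ) ≤ 2 := by exact_mod_cast (show s ≤ 2 by omega)
  have : φ = 2 - fibSlope := by unfold fibSlope; ring
  nlinarith [fibSlope_lt]

lemma onesIn_two_mul_fib (t : ℕ) {m : ℕ} (h₁ : fib (2 * t + 3) ≤ m)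
    (h₂ : m + 2 ≤ 2 * fib (2 * t + 3)) :
    onesIn (2 * fib (2 * t + 2)) m = 2 * (2 * fib (2 * t + 2) - fib (2 * t + 3)) := by
  obtain ⟨k, hk⟩ : ∃ k, m + 1 = fib (2 * t + 3) + k := ⟨m + 1 - fib (2 * t + 3), by omega⟩
  have hk₀ : 0 < k := by omega
  have hk₁ : k < fib (2 * t + 3) := by omega
  have hlow := (fract_mul_fibSlope_mem_Icc (2 * t + 2) hk₀ hk₁).1
  have hup := fract_mul_fibSlope_le_of_odd ⟨t, rfl⟩ hk₀ hk₁
  have hψ₂ : ψ ^ (2 * t + 2) = φ⁻¹ ^ (2 * t + 2) := goldenConj_pow_of_even ⟨t + 1, by ring⟩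
  have hψ₃ : ψ ^ (2 * t + 3) = -φ⁻¹ ^ (2 * t + 3) := goldenConj_pow_of_odd ⟨t + 1, by ring⟩
  have hlt := inv_goldenRatio_pow_lt_pow (show 2 * t + 2 < 2 * t + 3 by omega)
  have hpos : 0 < φ⁻¹ ^ (2 * t + 3) := by positivity
  have hfract := fract_add_fib_mul_fibSlope (x := k * fibSlope) (m := 2 * t + 3)
    (by linarith) (by linarith [Int.fract_lt_one ((k : ℝ) * fibSlope)])
  have hshift : ((m : ℝ) + 1) * fibSlope = k * fibSlope + fib (2 * t + 3) * fibSlope := by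
    rw [← add_mul]
    exact_mod_cast congrArg (fun n : ℕ => (n : ℝ) * fibSlope) (hk.trans (add_comm _ _))
  have hsq : 0 < φ⁻¹ ^ (2 * t + 1) * (1 - φ⁻¹) ^ 2 :=
    mul_pos (by positivity) (pow_pos (sub_pos.2 inv_goldenRatio_lt_one) 2)
  have hexp : φ⁻¹ ^ (2 * t + 1) * (1 - φ⁻¹) ^ 2 =
      φ⁻¹ ^ (2 * t + 1) - 2 * φ⁻¹ ^ (2 * t + 2) + φ⁻¹ ^ (2 * t + 3) := by ring
  rw [onesIn_eq_iff, hshift, hfract, hψ₃, Set.mem_Ico]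
  push_cast
  have hF : (fib (2 * t + 2) : ℝ) * fibSlope =
      2 * fib (2 * t + 2) - fib (2 * t + 3) + ψ ^ (2 * t + 2) := fib_mul_fibSlope _
  rw [hψ₂] at hF
  constructor <;> linarith

lemma x4_run_two_mul_fib (t : ℕ) :
    ∀ n, fib (2 * t + 3) ≤ n → n < fib (2 * t + 3) + (fib (2 * t + 3) - 2) →
      x4 (n + 2 * fib (2 * t + 2)) = x4 n := by
  intro n h₁ h₂
  have e₀ := onesIn_two_mul_fib t h₁ (by omega)
  have e₁ := onesIn_two_mul_fib t (m := n + 1) (by omega) (by omega)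
  rw [onesIn_add_one, e₀] at e₁
  have := fibWord_le_one n
  have := fibWord_le_one (n + 2 * fib (2 * t + 2))
  rw [x4_add_eq_iff, e₀]
  refine ⟨by omega, ?_⟩
  split_ifs <;> push_cast <;> omega

lemma exists_run_of_mem_expSet {x : ℕ → ℕ} {e : ℝ} (he : e ∈ expSet x) :
    ∃ i p s : ℕ, 0 < p ∧ (∀ n, i ≤ n → n < i + s → x (n + p) = x n) ∧ e ≤ ((p : ℝ) + s) / p := by
  obtain ⟨u, p, ⟨i, hi⟩, -, ⟨hp, hper⟩, rfl⟩ := he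
  refine ⟨i, p, u.length - p, hp, fun n h₁ h₂ => ?_, ?_⟩
  · have := hper (n - i) (by omega)
    rw [hi] at this
    simp only [List.getElem?_map] at this
    rw [List.getElem?_range (by omega), List.getElem?_range (by omega)] at this
    simpa [show i + (n - i + p) = n + p by omega, show i + (n - i) = n by omega] using this.symm
  · gcongr
    exact_mod_cast (show u.length ≤ p + (u.length - p) by omega)

lemma add_div_mem_expSet {x : ℕ → ℕ} {i p s : ℕ} (hp : 0 < p)
    (h : ∀ n, i ≤ n → n < i + s → x (n + p) = x n) : ((p : ℝ) + s) / p ∈ expSet x := by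
  refine ⟨(List.range (p + s)).map fun j => x (i + j), p, ⟨i, by simp [OccursAt]⟩,
    by simp; omega, ⟨hp, fun j hj => ?_⟩, by simp⟩
  simp only [List.length_map, List.length_range] at hj
  rw [List.getElem?_map, List.getElem?_map, List.getElem?_range (by omega),
    List.getElem?_range hj, Option.map_some, Option.map_some, ← add_assoc,
    h _ (by omega) (by omega)]

lemma one_add_goldenRatio_div_two_sub_lt (t : ℕ) :
    1 + φ / 2 - 1 / (t + 1) <
      (((2 * fib (2 * t + 2) : ℕ) : ℝ) + (fib (2 * t + 3) - 2 : ℕ)) /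
        (2 * fib (2 * t + 2) : ℕ) := by
  have h₂ : 2 ≤ fib (2 * t + 3) := le_trans (by decide) (Nat.fib_mono (show 3 ≤ 2 * t + 3 by omega))
  have hF : (t : ℝ) + 1 ≤ fib (2 * t + 2) := by
    exact_mod_cast (show t + 1 ≤ fib (2 * t + 2) by linarith [Nat.le_fib_add_one (2 * t + 2)])
  have hrec := fib_succ_sub_goldenRatio_mul_fib (2 * t + 2)
  have hψ : 0 < ψ ^ (2 * t + 2) := by
    rw [goldenConj_pow_of_even ⟨t + 1, by ring⟩]; positivity
  have hdiv : 2 ≤ 2 * (fib (2 * t + 2) : ℝ) / (t + 1) := by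
    rw [le_div_iff₀ (by positivity)]; linarith
  push_cast [Nat.cast_sub h₂]
  rw [lt_div_iff₀ (by linarith)]
  have : (1 + φ / 2 - 1 / (t + 1)) * (2 * (fib (2 * t + 2) : ℝ)) =
      2 * fib (2 * t + 2) + φ * fib (2 * t + 2) - 2 * (fib (2 * t + 2) : ℝ) / (t + 1) := by
    field_simp
  rw [this]
  linarith

theorem critical_exponent_x4 :
    sSup (expSet x4) = 1 + ((1 + Real.sqrt 5) / 2) / 2 := by
  change sSup (expSet x4) = 1 + φ / 2
  have hmem t := add_div_mem_expSet (Nat.mul_pos two_pos (Nat.fib_pos.2 (by omega)))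
    (x4_run_two_mul_fib t)
  refine csSup_eq_of_forall_le_of_forall_lt_exists_gt ⟨_, hmem 0⟩ (fun e he => ?_) (fun w hw => ?_)
  · obtain ⟨i, p, s, hp, hrun, he⟩ := exists_run_of_mem_expSet he
    have := two_mul_le_goldenRatio_mul_of_x4_run hp hrun
    have hp' : (0 : ℝ) < p := by exact_mod_cast hp
    calc e ≤ (p + s) / p := he
      _ ≤ 1 + φ / 2 := by rw [div_le_iff₀ hp']; linarith
  · obtain ⟨t, ht⟩ := exists_nat_one_div_lt (sub_pos.2 hw)
    exact ⟨_, hmem t, by linarith [one_add_goldenRatio_div_two_sub_lt t]⟩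
end
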